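/- arXiv:1205.6657 — 2 statements merged into one kernel-verified Lean document; each statement's English description precedes it below -/
import Mathlib

section
/- Let a, b ∈ ℝ and let c > 0 be a real constant (representing e^{iφ} for 0 ≤ φ ≤ π/2) with a < a + c(b−a). Let f be a positive real-valued function differentiable on an open set containing [a, a + c(b−a)] with f′ integrable on [a, a + c(b−a)]. Fix q > 1 and set p = q/(q−1). Suppose |f′|^q is c-convex, i.e. |f′(a + t c (b−a))|^q ≤ (1−t)|f′(a)|^q + t|f′(b)|^q for all t ∈ [0,1]. Then |(1/6)[f(a) + 4 f(a + c(b−a)/2) + f(a + c(b−a))] − (1/(c(b−a))) ∫_a^{a+c(b−a)} f(x) dx| ≤ c(b−a) (2(1 + 2^{p+1})/(6^{p+1}(p+1)))^{1/p} [ (|f′(a)|^q + |f′(b)|^q)/2 ]^{1/q}. -/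
/-!
Integrating by parts against the Peano kernel `K` of Simpson's rule (`x - (a + h/6)` on the left
half of `[a, a + h]`, `x - (a + 5h/6)` on the right half) turns the Simpson error into
`(1/h) ∫ K f'`. Hölder's inequality bounds this by `‖K‖_p ‖f'‖_q`, where
`∫ |K|^p = h^(p+1) · 2 (1 + 2^(p+1)) / (6^(p+1) (p+1))` is computed exactly, and `c`-convexity of
`|f'|^q`, read at `t = (x - a) / h`, bounds `∫ |f'|^q` by the integral of the chord,
`h (|f' a|^q + |f' b|^q) / 2`.
-/

open MeasureTheory Set intervalIntegral
open scoped Interval ENNReal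

lemma integral_abs_rpow_neg_of_nonneg {p s r : ℝ} (hp : 0 ≤ p) (hs : 0 ≤ s) (hr : 0 ≤ r) :
    ∫ u in (-s)..r, |u| ^ p = (s ^ (p + 1) + r ^ (p + 1)) / (p + 1) := by
  have hcont : Continuous fun u : ℝ => |u| ^ p := continuous_abs.rpow_const fun _ => Or.inr hp
  have hright : ∀ t, 0 ≤ t → ∫ u in (0 : ℝ)..t, |u| ^ p = t ^ (p + 1) / (p + 1) := by
    intro t ht
    rw [integral_congr fun u hu => by rw [abs_of_nonneg (uIcc_of_le ht ▸ hu).1],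
      integral_rpow (Or.inl (by linarith)), Real.zero_rpow (by positivity), sub_zero]
  have hleft : ∫ u in (-s)..0, |u| ^ p = s ^ (p + 1) / (p + 1) := by
    have hneg := integral_comp_neg (a := 0) (b := s) fun u : ℝ => |u| ^ p
    simp only [abs_neg, neg_zero] at hneg
    rw [← hneg, hright s hs]
  rw [← integral_add_adjacent_intervals (hcont.intervalIntegrable _ 0)
      (hcont.intervalIntegrable 0 _),
    hleft, hright r hr, add_div]

lemma integral_sub_mul_deriv {f f' : ℝ → ℝ} {u v γ : ℝ}
    (hf : ∀ x ∈ uIcc u v, HasDerivAt f (f' x) x) (hf' : IntervalIntegrable f' volume u v) :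
    ∫ x in u..v, (x - γ) * f' x = (v - γ) * f v - (u - γ) * f u - ∫ x in u..v, f x := by
  simpa only [one_mul, id] using integral_mul_deriv_eq_deriv_mul
    (fun x _ => (hasDerivAt_id x).sub_const γ) hf intervalIntegrable_const hf'

lemma integral_le_of_le_linear_interpolation {g : ℝ → ℝ} {a h A B : ℝ} (hh : 0 < h)
    (hg : IntervalIntegrable g volume a (a + h))
    (hle : ∀ x ∈ Icc a (a + h), g x ≤ (1 - (x - a) / h) * A + (x - a) / h * B) :
    ∫ x in a..a + h, g x ≤ h * ((A + B) / 2) := by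
  refine (integral_mono_on (by linarith) hg
    ((by fun_prop : Continuous fun x => (1 - (x - a) / h) * A + (x - a) / h * B).intervalIntegrable
      _ _) hle).trans_eq ?_
  rw [integral_comp_sub_right (fun u => (1 - u / h) * A + u / h * B) a, sub_self,
    add_sub_cancel_left]
  have haffine : ∀ x, (1 - x / h) * A + x / h * B = A + (B - A) / h * x := fun x => by
    field_simp; ring
  simp only [haffine]
  rw [integral_add intervalIntegrable_const (intervalIntegrable_id.const_mul _),
    intervalIntegral.integral_const_mul, intervalIntegral.integral_const, integral_id]
  field_simp
  ring

lemma abs_le_rpow_inv_of_rpow_le_linear_interpolation {g : ℝ → ℝ} {a h q A B x : ℝ}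
    (hh : 0 < h) (hq : 0 < q) (hA : 0 ≤ A) (hB : 0 ≤ B)
    (hle : ∀ x ∈ Icc a (a + h), |g x| ^ q ≤ (1 - (x - a) / h) * A + (x - a) / h * B)
    (hx : x ∈ Icc a (a + h)) : |g x| ≤ (A + B) ^ q⁻¹ := by
  have ht : (x - a) / h ≤ 1 := (div_le_one hh).2 (by linarith [hx.2])
  have ht' : 0 ≤ (x - a) / h := div_nonneg (by linarith [hx.1]) hh.le
  rw [Real.le_rpow_inv_iff_of_pos (abs_nonneg _) (by positivity) hq]
  nlinarith [hle x hx]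

lemma memLp_restrict_Ioc_of_abs_le {g : ℝ → ℝ} {a b C : ℝ} (r : ℝ≥0∞)
    (hg : AEStronglyMeasurable g (volume.restrict (Ioc a b)))
    (hle : ∀ x ∈ Ioc a b, |g x| ≤ C) :
    MemLp g r (volume.restrict (Ioc a b)) :=
  (memLp_top_of_bound hg C ((ae_restrict_iff' measurableSet_Ioc).2
    (ae_of_all _ fun x hx => (Real.norm_eq_abs _).trans_le (hle x hx)))).mono_exponent le_top

theorem abs_intervalIntegral_mul_le_Lp_mul_Lq {a b p q : ℝ} {g k : ℝ → ℝ} (hab : a ≤ b)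
    (hpq : p.HolderConjugate q) (hg : MemLp g (ENNReal.ofReal p) (volume.restrict (Ioc a b)))
    (hk : MemLp k (ENNReal.ofReal q) (volume.restrict (Ioc a b))) :
    |∫ x in a..b, g x * k x| ≤
      (∫ x in a..b, |g x| ^ p) ^ (1 / p) * (∫ x in a..b, |k x| ^ q) ^ (1 / q) := by
  simp only [integral_of_le hab]
  calc |∫ x in Ioc a b, g x * k x| ≤ ∫ x in Ioc a b, ‖g x * k x‖ :=
        (Real.norm_eq_abs _).symm.trans_le (norm_integral_le_integral_norm _)
    _ = ∫ x in Ioc a b, ‖g x‖ * ‖k x‖ := by simp only [norm_mul]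
    _ ≤ _ := by simpa only [Real.norm_eq_abs] using integral_mul_norm_le_Lp_mul_Lq hpq hg hk

lemma one_div_mul_rpow_mul_rpow {h p q C D : ℝ} (hh : 0 < h) (hpq : p.HolderConjugate q)
    (hC : 0 ≤ C) (hD : 0 ≤ D) :
    1 / h * ((h ^ (p + 1) * C) ^ (1 / p) * (h * D) ^ (1 / q)) = h * C ^ (1 / p) * D ^ (1 / q) := by
  have hexp : h ^ ((p + 1) * (1 / p)) * h ^ (1 / q) = h ^ (2 : ℝ) := by
    rw [← Real.rpow_add hh, add_mul, mul_one_div_cancel hpq.ne_zero, one_mul, one_div, one_div,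
      add_assoc, hpq.inv_add_inv_eq_one, one_add_one_eq_two]
  rw [Real.mul_rpow (by positivity) hC, Real.mul_rpow hh.le hD, ← Real.rpow_mul hh.le]
  calc 1 / h * (h ^ ((p + 1) * (1 / p)) * C ^ (1 / p) * (h ^ (1 / q) * D ^ (1 / q)))
      = 1 / h * (h ^ ((p + 1) * (1 / p)) * h ^ (1 / q)) * C ^ (1 / p) * D ^ (1 / q) := by ring
    _ = h * C ^ (1 / p) * D ^ (1 / q) := by
      rw [hexp, Real.rpow_two]
      field_simp

/-- The Peano kernel of Simpson's rule on `[a, a + h]`. -/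
noncomputable def simpsonKernel (a h x : ℝ) : ℝ :=
  if x ≤ a + h / 2 then x - (a + h / 6) else x - (a + 5 * h / 6)

section

variable {a h : ℝ}

lemma measurable_simpsonKernel : Measurable (simpsonKernel a h) :=
  Measurable.ite (measurableSet_le measurable_id measurable_const)
    (measurable_id.sub_const _) (measurable_id.sub_const _)

lemma abs_simpsonKernel_le {x : ℝ} (hx : x ∈ Icc a (a + h)) :
    |simpsonKernel a h x| ≤ h / 3 := by
  unfold simpsonKernel
  split_ifs <;> rw [abs_le] <;> constructor <;> linarith [hx.1, hx.2]

lemma integral_comp_simpsonKernel (hh : 0 ≤ h) {F : ℝ → ℝ → ℝ}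
    (hleft : IntervalIntegrable (fun x => F (x - (a + h / 6)) x) volume a (a + h / 2))
    (hright : IntervalIntegrable (fun x => F (x - (a + 5 * h / 6)) x) volume (a + h / 2) (a + h)) :
    ∫ x in a..a + h, F (simpsonKernel a h x) x =
      (∫ x in a..a + h / 2, F (x - (a + h / 6)) x) +
        ∫ x in a + h / 2..a + h, F (x - (a + 5 * h / 6)) x := by
  have hm : a ≤ a + h / 2 := by linarith
  have hm' : a + h / 2 ≤ a + h := by linarith
  have hEqLeft : EqOn (fun x => F (simpsonKernel a h x) x) (fun x => F (x - (a + h / 6)) x)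
      (Ι a (a + h / 2)) := fun x hx => by
    rw [uIoc_of_le hm] at hx
    simp only [simpsonKernel, if_pos hx.2]
  have hEqRight : EqOn (fun x => F (simpsonKernel a h x) x)
      (fun x => F (x - (a + 5 * h / 6)) x) (Ι (a + h / 2) (a + h)) := fun x hx => by
    rw [uIoc_of_le hm'] at hx
    simp only [simpsonKernel, if_neg (not_le.2 hx.1)]
  rw [← integral_add_adjacent_intervals ((intervalIntegrable_congr hEqLeft).2 hleft)
      ((intervalIntegrable_congr hEqRight).2 hright),
    integral_congr_ae (ae_of_all _ hEqLeft), integral_congr_ae (ae_of_all _ hEqRight)]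

end

theorem integral_simpsonKernel_mul_deriv {f f' : ℝ → ℝ} {a h : ℝ} (hh : 0 ≤ h)
    (hf : ∀ x ∈ Icc a (a + h), HasDerivAt f (f' x) x)
    (hf' : IntervalIntegrable f' volume a (a + h)) :
    ∫ x in a..a + h, simpsonKernel a h x * f' x =
      h / 6 * (f a + 4 * f (a + h / 2) + f (a + h)) - ∫ x in a..a + h, f x := by
  have hm : a ≤ a + h / 2 := by linarith
  have hm' : a + h / 2 ≤ a + h := by linarith
  have hI : Icc a (a + h) = [[a, a + h]] := (uIcc_of_le (by linarith)).symm
  have hleft : [[a, a + h / 2]] ⊆ [[a, a + h]] :=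
    hI ▸ uIcc_subset_Icc ⟨le_rfl, by linarith⟩ ⟨hm, hm'⟩
  have hright : [[a + h / 2, a + h]] ⊆ [[a, a + h]] :=
    hI ▸ uIcc_subset_Icc ⟨hm, hm'⟩ ⟨by linarith, le_rfl⟩
  have hfc : ContinuousOn f [[a, a + h]] := fun x hx =>
    (hf x (hI ▸ hx)).continuousAt.continuousWithinAt
  have hderiv : ∀ x ∈ [[a, a + h]], HasDerivAt f (f' x) x := fun x hx => hf x (hI ▸ hx)
  rw [integral_comp_simpsonKernel (F := fun k x => k * f' x) hh
      ((hf'.mono_set hleft).continuousOn_mul (continuous_sub_right _).continuousOn)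
      ((hf'.mono_set hright).continuousOn_mul (continuous_sub_right _).continuousOn),
    integral_sub_mul_deriv (fun x hx => hderiv x (hleft hx)) (hf'.mono_set hleft),
    integral_sub_mul_deriv (fun x hx => hderiv x (hright hx)) (hf'.mono_set hright),
    ← integral_add_adjacent_intervals ((hfc.mono hleft).intervalIntegrable)
      ((hfc.mono hright).intervalIntegrable)]
  ring

theorem integral_abs_simpsonKernel_rpow {a h p : ℝ} (hh : 0 ≤ h) (hp : 0 ≤ p) :
    ∫ x in a..a + h, |simpsonKernel a h x| ^ p =
      h ^ (p + 1) * (2 * (1 + 2 ^ (p + 1)) / (6 ^ (p + 1) * (p + 1))) := by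
  have hcont : Continuous fun u : ℝ => |u| ^ p := continuous_abs.rpow_const fun _ => Or.inr hp
  rw [integral_comp_simpsonKernel (F := fun k _ => |k| ^ p) hh
      ((hcont.comp (continuous_sub_right _)).intervalIntegrable _ _)
      ((hcont.comp (continuous_sub_right _)).intervalIntegrable _ _),
    integral_comp_sub_right (fun u => |u| ^ p), integral_comp_sub_right (fun u => |u| ^ p)]
  have hsixth : (h / 6) ^ (p + 1) = h ^ (p + 1) / 6 ^ (p + 1) := Real.div_rpow hh (by norm_num) _
  have hthird : (h / 3) ^ (p + 1) = h ^ (p + 1) * 2 ^ (p + 1) / 6 ^ (p + 1) := by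
    rw [show h / 3 = h * 2 / 6 by ring, Real.div_rpow (by positivity) (by norm_num),
      Real.mul_rpow hh (by norm_num)]
  rw [show a - (a + h / 6) = -(h / 6) by ring, show a + h / 2 - (a + h / 6) = h / 3 by ring,
    show a + h / 2 - (a + 5 * h / 6) = -(h / 3) by ring,
    show a + h - (a + 5 * h / 6) = h / 6 by ring,
    integral_abs_rpow_neg_of_nonneg hp (by positivity) (by positivity),
    integral_abs_rpow_neg_of_nonneg hp (by positivity) (by positivity), hsixth, hthird]
  field_simp
  ring

theorem simpson_error_le_of_abs_deriv_rpow_le_linear_interpolation {f f' : ℝ → ℝ}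
    {a h p q A B : ℝ} (hh : 0 < h) (hf : ∀ x ∈ Icc a (a + h), HasDerivAt f (f' x) x)
    (hf' : IntervalIntegrable f' volume a (a + h)) (hpq : p.HolderConjugate q)
    (hle : ∀ x ∈ Icc a (a + h), |f' x| ^ q ≤ (1 - (x - a) / h) * A + (x - a) / h * B) :
    |1 / 6 * (f a + 4 * f (a + h / 2) + f (a + h)) - 1 / h * ∫ x in a..a + h, f x| ≤
      h * (2 * (1 + 2 ^ (p + 1)) / (6 ^ (p + 1) * (p + 1))) ^ (1 / p) *
        ((A + B) / 2) ^ (1 / q) := by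
  have hp : 0 < p := hpq.pos
  have hq : 0 < q := hpq.symm.pos
  have hA : 0 ≤ A := by simpa using (hle a ⟨le_rfl, by linarith⟩).trans' (by positivity)
  have hB : 0 ≤ B := by
    simpa [hh.ne'] using (hle (a + h) ⟨by linarith, le_rfl⟩).trans' (by positivity)
  have hK : MemLp (simpsonKernel a h) (ENNReal.ofReal p) (volume.restrict (Ioc a (a + h))) :=
    memLp_restrict_Ioc_of_abs_le _ measurable_simpsonKernel.aestronglyMeasurable
      fun x hx => abs_simpsonKernel_le (Ioc_subset_Icc_self hx)
  have hf'q : MemLp f' (ENNReal.ofReal q) (volume.restrict (Ioc a (a + h))) :=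
    memLp_restrict_Ioc_of_abs_le _ hf'.1.aestronglyMeasurable fun x hx =>
      abs_le_rpow_inv_of_rpow_le_linear_interpolation hh hq hA hB hle (Ioc_subset_Icc_self hx)
  have hf'q_int : IntervalIntegrable (fun x => |f' x| ^ q) volume a (a + h) := by
    have hint := hf'q.integrable_norm_rpow (ENNReal.ofReal_pos.2 hq).ne' ENNReal.ofReal_ne_top
    rw [ENNReal.toReal_ofReal hq.le] at hint
    simpa only [Real.norm_eq_abs] using (intervalIntegrable_iff_integrableOn_Ioc_of_le
      (by linarith)).2 hint
  have hidentity : 1 / 6 * (f a + 4 * f (a + h / 2) + f (a + h)) - 1 / h * ∫ x in a..a + h, f x =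
      1 / h * ∫ x in a..a + h, simpsonKernel a h x * f' x := by
    rw [integral_simpsonKernel_mul_deriv hh.le hf hf']
    field_simp
  rw [hidentity, abs_mul, abs_of_pos (one_div_pos.2 hh)]
  calc 1 / h * |∫ x in a..a + h, simpsonKernel a h x * f' x|
      ≤ 1 / h * ((h ^ (p + 1) * (2 * (1 + 2 ^ (p + 1)) / (6 ^ (p + 1) * (p + 1)))) ^ (1 / p) *
          (h * ((A + B) / 2)) ^ (1 / q)) := by
        gcongr
        refine (abs_intervalIntegral_mul_le_Lp_mul_Lq (by linarith) hpq hK hf'q).trans ?_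
        rw [integral_abs_simpsonKernel_rpow hh.le hp.le]
        gcongr
        · exact integral_nonneg (by linarith) fun x _ => by positivity
        · exact integral_le_of_le_linear_interpolation hh hf'q_int hle
    _ = _ := one_div_mul_rpow_mul_rpow hh hpq (by positivity) (by positivity)

theorem simpson_type_phi_convex_holder'_general (a b c : ℝ)
    (hab : a < a + c * (b - a))
    (U : Set ℝ) (hsub : Set.Icc a (a + c * (b - a)) ⊆ U)
    (f f' : ℝ → ℝ)
    (hderiv : ∀ x ∈ U, HasDerivAt f (f' x) x)
    (hint : IntervalIntegrable f' MeasureTheory.volume a (a + c * (b - a)))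
    (q p : ℝ) (hq : 1 < q) (hp : p = q / (q - 1))
    (hconv : ∀ t ∈ Set.Icc (0 : ℝ) 1,
      |f' (a + t * c * (b - a))| ^ q ≤ (1 - t) * |f' a| ^ q + t * |f' b| ^ q) :
    |(1 / 6) * (f a + 4 * f (a + c * (b - a) / 2) + f (a + c * (b - a))) -
        (1 / (c * (b - a))) * ∫ x in a..(a + c * (b - a)), f x| ≤
      c * (b - a) * (2 * (1 + 2 ^ (p + 1)) / (6 ^ (p + 1) * (p + 1))) ^ (1 / p) *
        ((|f' a| ^ q + |f' b| ^ q) / 2) ^ (1 / q) := by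
  have hh : 0 < c * (b - a) := by linarith
  refine simpson_error_le_of_abs_deriv_rpow_le_linear_interpolation hh
    (fun x hx => hderiv x (hsub hx)) hint
    ((Real.holderConjugate_iff_eq_conjExponent hq).2 hp).symm fun x hx => ?_
  have ht : (x - a) / (c * (b - a)) ∈ Icc (0 : ℝ) 1 :=
    ⟨div_nonneg (by linarith [hx.1]) hh.le, (div_le_one hh).2 (by linarith [hx.2])⟩
  have hx : a + (x - a) / (c * (b - a)) * c * (b - a) = x := by
    rw [mul_assoc, div_mul_cancel₀ _ hh.ne', add_sub_cancel]
  simpa only [hx] using hconv _ ht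

/-- **Simpson type inequality via Hölder, second form (Theorem 3.3).** If
`|f'|^q` is `c`-convex for some `q > 1` and `p = q / (q - 1)`, then the Simpson
quadrature error on `[a, a + c * (b - a)]` is bounded by
`c * (b - a) * (2 * (1 + 2^(p+1)) / (6^(p+1) * (p+1)))^(1/p) *
  ((|f' a|^q + |f' b|^q) / 2)^(1/q)`. -/
theorem simpson_type_phi_convex_holder' (a b c : ℝ) (hc : 0 < c)
    (hab : a < a + c * (b - a))
    (U : Set ℝ) (hU : IsOpen U) (hsub : Set.Icc a (a + c * (b - a)) ⊆ U)
    (f f' : ℝ → ℝ) (hpos : ∀ x ∈ U, 0 < f x)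
    (hderiv : ∀ x ∈ U, HasDerivAt f (f' x) x)
    (hint : IntervalIntegrable f' MeasureTheory.volume a (a + c * (b - a)))
    (q p : ℝ) (hq : 1 < q) (hp : p = q / (q - 1))
    (hconv : ∀ t ∈ Set.Icc (0 : ℝ) 1,
      |f' (a + t * c * (b - a))| ^ q ≤ (1 - t) * |f' a| ^ q + t * |f' b| ^ q) :
    |(1 / 6) * (f a + 4 * f (a + c * (b - a) / 2) + f (a + c * (b - a))) -
        (1 / (c * (b - a))) * ∫ x in a..(a + c * (b - a)), f x| ≤
      c * (b - a) * (2 * (1 + 2 ^ (p + 1)) / (6 ^ (p + 1) * (p + 1))) ^ (1 / p) *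
        ((|f' a| ^ q + |f' b| ^ q) / 2) ^ (1 / q) :=
  simpson_type_phi_convex_holder'_general a b c hab U hsub f f' hderiv hint q p hq hp hconv
end

section
/- Let a, b ∈ ℝ and let c > 0 be a real constant (representing e^{iφ} for 0 ≤ φ ≤ π/2) with a < a + c(b−a). Let f be a positive real-valued function differentiable on an open set containing [a, a + c(b−a)] with f′ integrable on [a, a + c(b−a)]. Fix q ≥ 1 and suppose |f′|^q is c-convex, i.e. |f′(a + t c (b−a))|^q ≤ (1−t)|f′(a)|^q + t|f′(b)|^q for all t ∈ [0,1]. Then |(1/6)[f(a) + 4 f(a + c(b−a)/2) + f(a + c(b−a))] − (1/(c(b−a))) ∫_a^{a+c(b−a)} f(x) dx| ≤ c(b−a) (5/72)^{1 − 1/q} { ((61|f′(a)|^q + 29|f′(b)|^q)/1296)^{1/q} + ((29|f′(a)|^q + 61|f′(b)|^q)/1296)^{1/q} }. -/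
/-!
With `L = c (b - a)`, integration by parts on `[0, 1/2]` and `[1/2, 1]` writes the Simpson error as
`L ∫₀¹ k(t) f'(a + L t) dt` for the kernel `k(t) = t - 1/6` on `[0, 1/2]` and `t - 5/6` on `[1/2, 1]`.
On each half, Hölder's inequality with weight `|k|` together with the `c`-convexity bound
`|f'(a + L t)|^q ≤ (1 - t) |f' a|^q + t |f' b|^q` reduces everything to explicit integrals of `|k|`
and of `|k|` against that affine bound.
-/

open MeasureTheory intervalIntegral Set

theorem simpson_sub_integral_eq_kernel {g g' : ℝ → ℝ}
    (hg : ∀ t ∈ Icc (0 : ℝ) 1, HasDerivAt g (g' t) t) (hg' : IntervalIntegrable g' volume 0 1) :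
    (1 / 6) * (g 0 + 4 * g (1 / 2) + g 1) - ∫ t in (0 : ℝ)..1, g t =
      (∫ t in (0 : ℝ)..1 / 2, (t - 1 / 6) * g' t) + ∫ t in (1 / 2 : ℝ)..1, (t - 5 / 6) * g' t := by
  have hI : uIcc (0 : ℝ) 1 = Icc 0 1 := uIcc_of_le zero_le_one
  have hhalf : (1 / 2 : ℝ) ∈ uIcc 0 1 := by rw [hI]; norm_num
  have hg_int : IntervalIntegrable g volume 0 1 :=
    ContinuousOn.intervalIntegrable fun t ht ↦ (hg t (hI ▸ ht)).continuousAt.continuousWithinAt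
  have hparts (u v m : ℝ) (huv : uIcc u v ⊆ uIcc 0 1) :
      ∫ t in u..v, (t - m) * g' t = (v - m) * g v - (u - m) * g u - ∫ t in u..v, g t := by
    simpa using integral_mul_deriv_eq_deriv_mul (u' := fun _ ↦ 1)
      (fun t _ ↦ (hasDerivAt_id t).sub_const m) (fun t ht ↦ hg t (hI ▸ huv ht))
      intervalIntegrable_const (hg'.mono_set huv)
  rw [hparts 0 (1 / 2) (1 / 6) (uIcc_subset_uIcc_left hhalf),
    hparts (1 / 2) 1 (5 / 6) (uIcc_subset_uIcc_right hhalf),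
    ← integral_add_adjacent_intervals (hg_int.mono_set (uIcc_subset_uIcc_left hhalf))
      (hg_int.mono_set (uIcc_subset_uIcc_right hhalf))]
  ring

theorem IntervalIntegrable.comp_add_mul_zero_one {f : ℝ → ℝ} {a L : ℝ} (hL : L ≠ 0)
    (hf : IntervalIntegrable f volume a (a + L)) :
    IntervalIntegrable (fun t ↦ f (a + L * t)) volume 0 1 := by
  have := (hf.comp_add_left a).comp_mul_left (c := L)
  simpa only [sub_self, zero_div, add_sub_cancel_left, div_self hL] using this

theorem simpson_sub_average_eq_kernel {f f' : ℝ → ℝ} {a L : ℝ} (hL : 0 < L)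
    (hf : ∀ x ∈ Icc a (a + L), HasDerivAt f (f' x) x)
    (hf' : IntervalIntegrable f' volume a (a + L)) :
    (1 / 6) * (f a + 4 * f (a + L / 2) + f (a + L)) - (1 / L) * ∫ x in a..a + L, f x =
      L * ((∫ t in (0 : ℝ)..1 / 2, (t - 1 / 6) * f' (a + L * t)) +
        ∫ t in (1 / 2 : ℝ)..1, (t - 5 / 6) * f' (a + L * t)) := by
  have hderiv (t : ℝ) (ht : t ∈ Icc (0 : ℝ) 1) :
      HasDerivAt (fun s ↦ f (a + L * s)) (f' (a + L * t) * L) t := by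
    have hmem : a + L * t ∈ Icc a (a + L) :=
      ⟨by nlinarith [ht.1], by nlinarith [ht.2]⟩
    have hlin : HasDerivAt (fun s : ℝ ↦ a + L * s) L t := by
      simpa using ((hasDerivAt_id t).const_mul L).const_add a
    exact (hf _ hmem).comp t hlin
  have hmean : ∫ t in (0 : ℝ)..1, f (a + L * t) = (1 / L) * ∫ x in a..a + L, f x := by
    simp [integral_comp_add_mul f hL.ne']
  have key := simpson_sub_integral_eq_kernel hderiv
    ((hf'.comp_add_mul_zero_one hL.ne').mul_const L)
  rw [← hmean]
  simp only [mul_zero, add_zero, mul_one, ← mul_assoc] at key ⊢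
  rw [show a + L / 2 = a + L * (1 / 2) by ring, key, intervalIntegral.integral_mul_const,
    intervalIntegral.integral_mul_const]
  ring

theorem integral_mul_le_integral_mul_rpow {α : Type*} [MeasurableSpace α] {μ : Measure α}
    {w g : α → ℝ} {q : ℝ} (hq : 1 ≤ q) (hw : 0 ≤ w) (hg : 0 ≤ g) (hw_int : Integrable w μ)
    (hg_meas : AEStronglyMeasurable g μ) (hwg_int : Integrable (fun x ↦ w x * g x ^ q) μ) :
    ∫ x, w x * g x ∂μ ≤ (∫ x, w x ∂μ) ^ (1 - 1 / q) * (∫ x, w x * g x ^ q ∂μ) ^ (1 / q) := by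
  rcases hq.eq_or_lt with rfl | hq
  · simp
  set p := q.conjExponent
  have hpq : p.HolderConjugate q := (Real.HolderConjugate.conjExponent hq).symm
  have hp_inv : 1 / p = 1 - 1 / q := by
    rw [eq_sub_iff_add_eq, one_div, one_div, hpq.inv_add_inv_eq_one]
  -- Hölder with exponents `p, q` for the factorisation `w * g = w ^ (1 / p) * (w ^ (1 / q) * g)`.
  set F : α → ℝ := fun x ↦ w x ^ (1 / p)
  set G : α → ℝ := fun x ↦ w x ^ (1 / q) * g x
  have hF_nonneg : 0 ≤ F := fun x ↦ Real.rpow_nonneg (hw x) _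
  have hG_nonneg : 0 ≤ G := fun x ↦ mul_nonneg (Real.rpow_nonneg (hw x) _) (hg x)
  have hF_pow : (fun x ↦ F x ^ p) = w := funext fun x ↦ by
    rw [← Real.rpow_mul (hw x), one_div_mul_cancel hpq.ne_zero, Real.rpow_one]
  have hG_pow : (fun x ↦ G x ^ q) = fun x ↦ w x * g x ^ q := funext fun x ↦ by
    rw [Real.mul_rpow (Real.rpow_nonneg (hw x) _) (hg x), ← Real.rpow_mul (hw x),
      one_div_mul_cancel hpq.symm.ne_zero, Real.rpow_one]
  have hFG : (fun x ↦ F x * G x) = fun x ↦ w x * g x := funext fun x ↦ by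
    have h : 1 / p + 1 / q = 1 := by rw [one_div, one_div, hpq.inv_add_inv_eq_one]
    rw [← mul_assoc, ← Real.rpow_add' (hw x) (by rw [h]; exact one_ne_zero), h, Real.rpow_one]
  have hF : MemLp F (ENNReal.ofReal p) μ := by
    refine (integrable_norm_rpow_iff (f := F) (hw_int.aemeasurable.pow_const _).aestronglyMeasurable
      (by simpa using hpq.pos) ENNReal.ofReal_ne_top).1 ?_
    simp_rw [ENNReal.toReal_ofReal hpq.nonneg, Real.norm_of_nonneg (hF_nonneg _)]
    rwa [hF_pow]
  have hG : MemLp G (ENNReal.ofReal q) μ := by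
    refine (integrable_norm_rpow_iff (f := G)
      ((hw_int.aemeasurable.pow_const _).aestronglyMeasurable.mul hg_meas)
      (by simpa using hpq.symm.pos) ENNReal.ofReal_ne_top).1 ?_
    simp_rw [ENNReal.toReal_ofReal hpq.symm.nonneg, Real.norm_of_nonneg (hG_nonneg _)]
    rwa [hG_pow]
  have := integral_mul_le_Lp_mul_Lq_of_nonneg hpq (.of_forall hF_nonneg)
    (.of_forall hG_nonneg) hF hG
  rwa [hFG, hF_pow, hG_pow, hp_inv] at this

theorem abs_integral_mul_le_of_abs_rpow_le {k h ℓ : ℝ → ℝ} {u v q : ℝ} (huv : u ≤ v)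
    (hq : 1 ≤ q) (hk : Continuous k) (hℓ : Continuous ℓ) (hh : IntervalIntegrable h volume u v)
    (hbound : ∀ t ∈ Icc u v, |h t| ^ q ≤ ℓ t) :
    |∫ t in u..v, k t * h t| ≤
      (∫ t in u..v, |k t|) ^ (1 - 1 / q) * (∫ t in u..v, |k t| * ℓ t) ^ (1 / q) := by
  simp only [integral_of_le huv]
  have hbound' : ∀ᵐ t ∂volume.restrict (Ioc u v), |k t| * |h t| ^ q ≤ |k t| * ℓ t :=
    ae_restrict_of_forall_mem measurableSet_Ioc fun t ht ↦
      mul_le_mul_of_nonneg_left (hbound t (Ioc_subset_Icc_self ht)) (abs_nonneg _)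
  have habs_meas : AEStronglyMeasurable (fun t ↦ |h t|) (volume.restrict (Ioc u v)) :=
    hh.1.aestronglyMeasurable.norm
  have hkℓ : IntegrableOn (fun t ↦ |k t| * ℓ t) (Ioc u v) :=
    (hk.abs.mul hℓ).integrableOn_Icc.mono_set Ioc_subset_Icc_self
  have hint : Integrable (fun t ↦ |k t| * |h t| ^ q) (volume.restrict (Ioc u v)) := by
    refine hkℓ.mono' (hk.abs.aestronglyMeasurable.mul
      (habs_meas.aemeasurable.pow_const q).aestronglyMeasurable) ?_
    filter_upwards [hbound'] with t ht
    rwa [Real.norm_of_nonneg (by positivity)]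
  calc |∫ t in Ioc u v, k t * h t|
      _ ≤ ∫ t in Ioc u v, |k t| * |h t| := by
        refine MeasureTheory.abs_integral_le_integral_abs.trans_eq ?_
        simp only [abs_mul]
      _ ≤ (∫ t in Ioc u v, |k t|) ^ (1 - 1 / q) * (∫ t in Ioc u v, |k t| * |h t| ^ q) ^ (1 / q) :=
        integral_mul_le_integral_mul_rpow hq (fun t ↦ abs_nonneg (k t)) (fun t ↦ abs_nonneg (h t))
          (hk.abs.integrableOn_Icc.mono_set Ioc_subset_Icc_self) habs_meas hint
      _ ≤ (∫ t in Ioc u v, |k t|) ^ (1 - 1 / q) * (∫ t in Ioc u v, |k t| * ℓ t) ^ (1 / q) := by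
        refine mul_le_mul_of_nonneg_left (Real.rpow_le_rpow ?_ ?_ (by positivity))
          (Real.rpow_nonneg (integral_nonneg fun t ↦ abs_nonneg _) _)
        · exact integral_nonneg fun t ↦ by positivity
        · exact integral_mono_ae hint hkℓ hbound'

theorem integral_quadratic (u v α β γ : ℝ) :
    ∫ t in u..v, (α + β * t + γ * t ^ 2) =
      α * (v - u) + β * (v ^ 2 - u ^ 2) / 2 + γ * (v ^ 3 - u ^ 3) / 3 := by
  have hint {f : ℝ → ℝ} (hf : Continuous f) : IntervalIntegrable f volume u v :=
    hf.intervalIntegrable u v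
  rw [intervalIntegral.integral_add (hint (by fun_prop)) (hint (by fun_prop)),
    intervalIntegral.integral_add (hint (by fun_prop)) (hint (by fun_prop)),
    intervalIntegral.integral_const_mul, intervalIntegral.integral_const_mul, integral_id,
    integral_pow, intervalIntegral.integral_const]
  simp only [smul_eq_mul]
  ring

theorem integral_abs_sub_one_sixth_mul_affine (A B : ℝ) :
    ∫ t in (0 : ℝ)..1 / 2, |t - 1 / 6| * ((1 - t) * A + t * B) = (61 * A + 29 * B) / 1296 := by
  have hleft : ∫ t in (0 : ℝ)..1 / 6, |t - 1 / 6| * ((1 - t) * A + t * B) =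
      ∫ t in (0 : ℝ)..1 / 6, (A / 6 + (B / 6 - 7 / 6 * A) * t + (A - B) * t ^ 2) := by
    refine integral_congr fun t ht ↦ ?_
    rw [uIcc_of_le (by norm_num)] at ht
    simp only [abs_of_nonpos (sub_nonpos.2 ht.2)]
    ring
  have hright : ∫ t in (1 / 6 : ℝ)..1 / 2, |t - 1 / 6| * ((1 - t) * A + t * B) =
      ∫ t in (1 / 6 : ℝ)..1 / 2, (-(A / 6) + (7 / 6 * A - B / 6) * t + (B - A) * t ^ 2) := by
    refine integral_congr fun t ht ↦ ?_
    rw [uIcc_of_le (by norm_num)] at ht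
    simp only [abs_of_nonneg (sub_nonneg.2 ht.1)]
    ring
  have hcont : Continuous fun t : ℝ ↦ |t - 1 / 6| * ((1 - t) * A + t * B) := by fun_prop
  rw [← integral_add_adjacent_intervals (hcont.intervalIntegrable 0 (1 / 6))
    (hcont.intervalIntegrable _ _), hleft, hright,
    integral_quadratic, integral_quadratic]
  ring

theorem integral_abs_sub_five_sixths_mul_affine (A B : ℝ) :
    ∫ t in (1 / 2 : ℝ)..1, |t - 5 / 6| * ((1 - t) * A + t * B) = (29 * A + 61 * B) / 1296 := by
  -- `t ↦ 1 - t` maps this integral to the one on `[0, 1/2]` with `A` and `B` exchanged.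
  have h := integral_comp_sub_left (fun t ↦ |t - 5 / 6| * ((1 - t) * A + t * B)) (a := 0)
    (b := 1 / 2) 1
  norm_num at h
  rw [← h, add_comm, ← integral_abs_sub_one_sixth_mul_affine B A]
  refine integral_congr fun t _ ↦ ?_
  rw [show 1 - t - 5 / 6 = -(t - 1 / 6) by ring, abs_neg]
  ring

theorem integral_abs_sub_one_sixth : ∫ t in (0 : ℝ)..1 / 2, |t - 1 / 6| = 5 / 72 :=
  calc ∫ t in (0 : ℝ)..1 / 2, |t - 1 / 6|
      _ = ∫ t in (0 : ℝ)..1 / 2, |t - 1 / 6| * ((1 - t) * 1 + t * 1) := by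
        simp only [mul_one, sub_add_cancel]
      _ = 5 / 72 := by rw [integral_abs_sub_one_sixth_mul_affine]; norm_num

theorem integral_abs_sub_five_sixths : ∫ t in (1 / 2 : ℝ)..1, |t - 5 / 6| = 5 / 72 :=
  calc ∫ t in (1 / 2 : ℝ)..1, |t - 5 / 6|
      _ = ∫ t in (1 / 2 : ℝ)..1, |t - 5 / 6| * ((1 - t) * 1 + t * 1) := by
        simp only [mul_one, sub_add_cancel]
      _ = 5 / 72 := by rw [integral_abs_sub_five_sixths_mul_affine]; norm_num

theorem abs_simpson_sub_average_le {f f' : ℝ → ℝ} {a L q A B : ℝ} (hL : 0 < L)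
    (hf : ∀ x ∈ Icc a (a + L), HasDerivAt f (f' x) x)
    (hf' : IntervalIntegrable f' volume a (a + L)) (hq : 1 ≤ q)
    (hconv : ∀ t ∈ Icc (0 : ℝ) 1, |f' (a + L * t)| ^ q ≤ (1 - t) * A + t * B) :
    |(1 / 6) * (f a + 4 * f (a + L / 2) + f (a + L)) - (1 / L) * ∫ x in a..a + L, f x| ≤
      L * (5 / 72) ^ (1 - 1 / q) *
        (((61 * A + 29 * B) / 1296) ^ (1 / q) + ((29 * A + 61 * B) / 1296) ^ (1 / q)) := by
  have hint := hf'.comp_add_mul_zero_one hL.ne'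
  have hhalf : (1 / 2 : ℝ) ∈ uIcc 0 1 := by rw [uIcc_of_le zero_le_one]; norm_num
  have hleft := abs_integral_mul_le_of_abs_rpow_le (k := fun t ↦ t - 1 / 6)
    (ℓ := fun t ↦ (1 - t) * A + t * B) (by norm_num : (0 : ℝ) ≤ 1 / 2) hq (by fun_prop)
    (by fun_prop) (hint.mono_set (uIcc_subset_uIcc_left hhalf))
    fun t ht ↦ hconv t ⟨ht.1, ht.2.trans (by norm_num)⟩
  have hright := abs_integral_mul_le_of_abs_rpow_le (k := fun t ↦ t - 5 / 6)
    (ℓ := fun t ↦ (1 - t) * A + t * B) (by norm_num : (1 / 2 : ℝ) ≤ 1) hq (by fun_prop)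
    (by fun_prop) (hint.mono_set (uIcc_subset_uIcc_right hhalf))
    fun t ht ↦ hconv t ⟨ht.1.trans' (by norm_num), ht.2⟩
  rw [integral_abs_sub_one_sixth, integral_abs_sub_one_sixth_mul_affine] at hleft
  rw [integral_abs_sub_five_sixths, integral_abs_sub_five_sixths_mul_affine] at hright
  rw [simpson_sub_average_eq_kernel hL hf hf', abs_mul, abs_of_pos hL, mul_assoc, mul_add]
  gcongr
  exact (abs_add_le _ _).trans (add_le_add hleft hright)

theorem simpson_type_phi_convex_power_mean_general (a b c : ℝ)
    (hab : a < a + c * (b - a))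
    (U : Set ℝ) (hsub : Set.Icc a (a + c * (b - a)) ⊆ U)
    (f f' : ℝ → ℝ)
    (hderiv : ∀ x ∈ U, HasDerivAt f (f' x) x)
    (hint : IntervalIntegrable f' MeasureTheory.volume a (a + c * (b - a)))
    (q : ℝ) (hq : 1 ≤ q)
    (hconv : ∀ t ∈ Set.Icc (0 : ℝ) 1,
      |f' (a + t * c * (b - a))| ^ q ≤ (1 - t) * |f' a| ^ q + t * |f' b| ^ q) :
    |(1 / 6) * (f a + 4 * f (a + c * (b - a) / 2) + f (a + c * (b - a))) -
        (1 / (c * (b - a))) * ∫ x in a..(a + c * (b - a)), f x| ≤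
      c * (b - a) * (5 / 72) ^ (1 - 1 / q) *
        (((61 * |f' a| ^ q + 29 * |f' b| ^ q) / 1296) ^ (1 / q) +
          ((29 * |f' a| ^ q + 61 * |f' b| ^ q) / 1296) ^ (1 / q)) :=
  abs_simpson_sub_average_le (by linarith) (fun x hx ↦ hderiv x (hsub hx)) hint hq
    fun t ht ↦ by rw [show a + c * (b - a) * t = a + t * c * (b - a) by ring]; exact hconv t ht

/-- **Simpson type inequality via the power-mean inequality (Theorem 3.4).**
If `|f'|^q` is `c`-convex for some `q ≥ 1`, then the Simpson quadrature error
on `[a, a + c * (b - a)]` is bounded by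
`c * (b - a) * (5/72)^(1 - 1/q) *
  (((61 * |f' a|^q + 29 * |f' b|^q) / 1296)^(1/q) +
    ((29 * |f' a|^q + 61 * |f' b|^q) / 1296)^(1/q))`. -/
theorem simpson_type_phi_convex_power_mean (a b c : ℝ) (hc : 0 < c)
    (hab : a < a + c * (b - a))
    (U : Set ℝ) (hU : IsOpen U) (hsub : Set.Icc a (a + c * (b - a)) ⊆ U)
    (f f' : ℝ → ℝ) (hpos : ∀ x ∈ U, 0 < f x)
    (hderiv : ∀ x ∈ U, HasDerivAt f (f' x) x)
    (hint : IntervalIntegrable f' MeasureTheory.volume a (a + c * (b - a)))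
    (q : ℝ) (hq : 1 ≤ q)
    (hconv : ∀ t ∈ Set.Icc (0 : ℝ) 1,
      |f' (a + t * c * (b - a))| ^ q ≤ (1 - t) * |f' a| ^ q + t * |f' b| ^ q) :
    |(1 / 6) * (f a + 4 * f (a + c * (b - a) / 2) + f (a + c * (b - a))) -
        (1 / (c * (b - a))) * ∫ x in a..(a + c * (b - a)), f x| ≤
      c * (b - a) * (5 / 72) ^ (1 - 1 / q) *
        (((61 * |f' a| ^ q + 29 * |f' b| ^ q) / 1296) ^ (1 / q) +
          ((29 * |f' a| ^ q + 61 * |f' b| ^ q) / 1296) ^ (1 / q)) :=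
  simpson_type_phi_convex_power_mean_general a b c hab U hsub f f' hderiv hint q hq hconv
end
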